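/- arXiv:1903.10347 — 3 statements merged into one kernel-verified Lean document; each statement's English description precedes it below -/
import Mathlib

section
/- Let N≥3 be an integer, α∈(0,N), θ∈[0,1), and let V:ℝ^N→ℝ be continuously differentiable such that for every x∈ℝ^N∖{0} the map t↦[N·V(tx)+∇V(tx)·(tx)]/t^α+(N−2)³θ/(4t^{α+2}|x|²) is nonincreasing on (0,∞). Then for every t≥0 and every x∈ℝ^N∖{0}: (α+N·t^{N+α})V(x) − (N+α)t^{N}V(tx) + (t^{N+α}−1)∇V(x)·x ≥ −(N−2)²θ·[2+α−(N+α)t^{N−2}+(N−2)t^{N+α}]/(4|x|²). -/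
open MeasureTheory Real Filter Topology

noncomputable section

/-- Euclidean space ℝ^N. -/
abbrev Pt (N : ℕ) := EuclideanSpace ℝ (Fin N)

/-- F(t) = ∫₀ᵗ f(s) ds. -/
def Fint (f : ℝ → ℝ) (t : ℝ) : ℝ := ∫ s in (0:ℝ)..t, f s

/-- The normalization constant of the Riesz potential. -/
def cRiesz (N : ℕ) (α : ℝ) : ℝ :=
  Real.Gamma (((N : ℝ) - α) / 2) / (Real.Gamma (α / 2) * 2 ^ α * Real.pi ^ ((N : ℝ) / 2))

/-- The nonlocal term D(u) = c_{N,α} ∬ F(u(x))F(u(y))/|x-y|^{N-α} dx dy. -/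
def Dfun (N : ℕ) (α : ℝ) (f : ℝ → ℝ) (u : Pt N → ℝ) : ℝ :=
  cRiesz N α *
    ∫ x : Pt N, ∫ y : Pt N, Fint f (u x) * Fint f (u y) / ‖x - y‖ ^ ((N : ℝ) - α)

/-- ‖∇u‖₂². -/
def gradSq (N : ℕ) (u : Pt N → ℝ) : ℝ := ∫ x : Pt N, ‖fderiv ℝ u x‖ ^ 2

/-- ‖u‖₂². -/
def l2Sq (N : ℕ) (u : Pt N → ℝ) : ℝ := ∫ x : Pt N, (u x) ^ 2

/-- The energy functional I. -/
def Ifun (N : ℕ) (α : ℝ) (V : Pt N → ℝ) (f : ℝ → ℝ) (u : Pt N → ℝ) : ℝ :=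
  (1/2) * ∫ x : Pt N, (‖fderiv ℝ u x‖ ^ 2 + V x * (u x) ^ 2) - (1/2) * Dfun N α f u

/-- The Pohozaev functional P. -/
def Pfun (N : ℕ) (α : ℝ) (V : Pt N → ℝ) (f : ℝ → ℝ) (u : Pt N → ℝ) : ℝ :=
  (((N : ℝ) - 2) / 2) * gradSq N u
    + (1/2) * ∫ x : Pt N, ((N : ℝ) * V x + fderiv ℝ V x x) * (u x) ^ 2
    - (((N : ℝ) + α) / 2) * Dfun N α f u

/-- The energy functional I^∞ for the constant potential. -/
def IfunInf (N : ℕ) (α : ℝ) (Vinf : ℝ) (f : ℝ → ℝ) (u : Pt N → ℝ) : ℝ :=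
  (1/2) * ∫ x : Pt N, (‖fderiv ℝ u x‖ ^ 2 + Vinf * (u x) ^ 2) - (1/2) * Dfun N α f u

/-- The Pohozaev functional P^∞ for the constant potential. -/
def PfunInf (N : ℕ) (α : ℝ) (Vinf : ℝ) (f : ℝ → ℝ) (u : Pt N → ℝ) : ℝ :=
  (((N : ℝ) - 2) / 2) * gradSq N u + ((N : ℝ) * Vinf / 2) * l2Sq N u
    - (((N : ℝ) + α) / 2) * Dfun N α f u

/-- The rescaling u_t(x) = u(x/t). -/
def rescale (N : ℕ) (u : Pt N → ℝ) (t : ℝ) : Pt N → ℝ := fun x => u (t⁻¹ • x)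

/-- 𝔤(t) = 2+α−(N+α)t^{N−2}+(N−2)t^{N+α}. -/
def gfun (N : ℕ) (α : ℝ) (t : ℝ) : ℝ :=
  2 + α - ((N : ℝ) + α) * t ^ ((N : ℝ) - 2) + ((N : ℝ) - 2) * t ^ ((N : ℝ) + α)

/-- 𝔥(t) = α−(N+α)t^{N}+N t^{N+α}. -/
def hfun (N : ℕ) (α : ℝ) (t : ℝ) : ℝ :=
  α - ((N : ℝ) + α) * t ^ (N : ℝ) + (N : ℝ) * t ^ ((N : ℝ) + α)

/-- u ∈ C_c^∞(ℝ^N, ℝ). -/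
def isTestFun (N : ℕ) (u : Pt N → ℝ) : Prop :=
  ContDiff ℝ (⊤ : ℕ∞) u ∧ HasCompactSupport u

/-- (V1): V continuous, nonnegative, V(x) → V_∞ > 0 as |x| → ∞. -/
def condV1 (N : ℕ) (V : Pt N → ℝ) (Vinf : ℝ) : Prop :=
  Continuous V ∧ (∀ x, 0 ≤ V x) ∧ 0 < Vinf ∧
    Tendsto V (cocompact (Pt N)) (𝓝 Vinf)

/-- (V2): V(x) ≤ V_∞. -/
def condV2 (N : ℕ) (V : Pt N → ℝ) (Vinf : ℝ) : Prop := ∀ x, V x ≤ Vinf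

/-- (V3) with parameter θ: V ∈ C¹ and the map
  t ↦ [N V(tx) + ∇V(tx)·(tx)]/t^α + (N−2)³θ/(4 t^{α+2}|x|²)
  is nonincreasing on (0,∞) for every x ≠ 0. -/
def condV3 (N : ℕ) (α θ : ℝ) (V : Pt N → ℝ) : Prop :=
  ContDiff ℝ 1 V ∧ ∀ x : Pt N, x ≠ 0 →
    AntitoneOn (fun t : ℝ =>
      ((N : ℝ) * V (t • x) + fderiv ℝ V (t • x) (t • x)) / t ^ α
        + ((N : ℝ) - 2) ^ 3 * θ / (4 * t ^ (α + 2) * ‖x‖ ^ 2)) (Set.Ioi (0 : ℝ))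

/-- (V4): V ∈ C¹ and decay conditions on ∇V(x)·x. -/
def condV4 (N : ℕ) (α : ℝ) (V : Pt N → ℝ) : Prop :=
  ContDiff ℝ 1 V ∧ ∃ θ' : ℝ, θ' ∈ Set.Ioo (0:ℝ) 1 ∧ ∃ Rbar : ℝ, 0 ≤ Rbar ∧
    (∀ x : Pt N, 0 < ‖x‖ → ‖x‖ < Rbar →
      fderiv ℝ V x x ≤ ((N : ℝ) - 2) ^ 2 / (2 * ‖x‖ ^ 2)) ∧
    (∀ x : Pt N, Rbar ≤ ‖x‖ → fderiv ℝ V x x ≤ θ' * α * V x)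

/-- (F1): f continuous with the growth bound. -/
def condF1 (N : ℕ) (α : ℝ) (f : ℝ → ℝ) : Prop :=
  Continuous f ∧ ∃ C₀ : ℝ, 0 < C₀ ∧ ∀ t : ℝ,
    |f t * t| ≤ C₀ * (|t| ^ (((N : ℝ) + α) / N) + |t| ^ (((N : ℝ) + α) / ((N : ℝ) - 2)))

/-- (F2): F(t) = o(t^{(N+α)/N}) at 0 and F(t) = o(t^{(N+α)/(N−2)}) at infinity. -/
def condF2 (N : ℕ) (α : ℝ) (f : ℝ → ℝ) : Prop :=
  Tendsto (fun t : ℝ => Fint f t / |t| ^ (((N : ℝ) + α) / N)) (𝓝[≠] (0:ℝ)) (𝓝 0) ∧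
  Tendsto (fun t : ℝ => Fint f t / |t| ^ (((N : ℝ) + α) / ((N : ℝ) - 2))) (cocompact ℝ) (𝓝 0)

/-- (F3): F(s₀) ≠ 0 for some s₀ > 0. -/
def condF3 (f : ℝ → ℝ) : Prop := ∃ s₀ : ℝ, 0 < s₀ ∧ Fint f s₀ ≠ 0

end

/-- (V3) implies the key pointwise inequality. -/
theorem stmt2 (N : ℕ) (hN : 3 ≤ N) (α θ : ℝ) (hα : 0 < α) (hαN : α < N)
    (hθ : θ ∈ Set.Ico (0:ℝ) 1) (V : Pt N → ℝ) (hV3 : condV3 N α θ V) :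
    ∀ t : ℝ, 0 ≤ t → ∀ x : Pt N, x ≠ 0 →
      (α + (N : ℝ) * t ^ ((N : ℝ) + α)) * V x
          - ((N : ℝ) + α) * t ^ (N : ℝ) * V (t • x)
          + (t ^ ((N : ℝ) + α) - 1) * fderiv ℝ V x x
        ≥ -(((N : ℝ) - 2) ^ 2 * θ * gfun N α t) / (4 * ‖x‖ ^ 2) := by
  obtain ⟨hVC, hanti'⟩ := hV3
  have hVd : Differentiable ℝ V := hVC.differentiable one_ne_zero
  have hVcont : Continuous V := hVC.continuous
  have hN3 : (3:ℝ) ≤ (N:ℝ) := by exact_mod_cast hN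
  have hNα : (0:ℝ) < (N:ℝ) + α := by linarith
  intro t ht x hx
  have hxn : ‖x‖ ≠ 0 := by simpa using hx
  have hx2 : (0:ℝ) < ‖x‖ ^ 2 := by positivity
  have hanti := hanti' x hx
  set φ : ℝ → ℝ := fun s => ((N:ℝ) * V (s • x) + fderiv ℝ V (s • x) (s • x)) / s ^ α
      + ((N:ℝ) - 2) ^ 3 * θ / (4 * s ^ (α + 2) * ‖x‖ ^ 2) with hφ
  set K : ℝ := ((N:ℝ) - 2) ^ 2 * θ / (4 * ‖x‖ ^ 2) with hK
  set g : ℝ → ℝ := fun s =>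
    (α + (N:ℝ) * s ^ ((N:ℝ) + α)) * V x - ((N:ℝ) + α) * s ^ (N:ℝ) * V (s • x)
      + (s ^ ((N:ℝ) + α) - 1) * fderiv ℝ V x x + K * gfun N α s with hg
  have hgfun1 : gfun N α 1 = 0 := by
    simp [gfun, Real.one_rpow]
  have hg1 : g 1 = 0 := by
    simp [hg, hgfun1, Real.one_rpow, one_smul]; ring
  have hderiv : ∀ s : ℝ, 0 < s →
      HasDerivAt g (((N:ℝ) + α) * s ^ ((N:ℝ) + α - 1) * (φ 1 - φ s)) s := by
    intro s hs
    have hs0 : s ≠ 0 := ne_of_gt hs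
    have h1 : HasDerivAt (fun u : ℝ => u ^ ((N:ℝ) + α))
        (((N:ℝ) + α) * s ^ ((N:ℝ) + α - 1)) s :=
      Real.hasDerivAt_rpow_const (Or.inl hs0)
    have h2 : HasDerivAt (fun u : ℝ => u ^ (N:ℝ)) ((N:ℝ) * s ^ ((N:ℝ) - 1)) s :=
      Real.hasDerivAt_rpow_const (Or.inl hs0)
    have h3 : HasDerivAt (fun u : ℝ => u ^ ((N:ℝ) - 2))
        (((N:ℝ) - 2) * s ^ ((N:ℝ) - 2 - 1)) s :=
      Real.hasDerivAt_rpow_const (Or.inl hs0)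
    have hsm : HasDerivAt (fun u : ℝ => u • x) x s := by
      simpa using (hasDerivAt_id s).smul_const x
    have hVc : HasDerivAt (fun u : ℝ => V (u • x)) (fderiv ℝ V (s • x) x) s :=
      (hVd (s • x)).hasFDerivAt.comp_hasDerivAt s hsm
    have hA : HasDerivAt (fun u : ℝ => (α + (N:ℝ) * u ^ ((N:ℝ) + α)) * V x)
        (((N:ℝ) * (((N:ℝ) + α) * s ^ ((N:ℝ) + α - 1))) * V x) s :=
      ((h1.const_mul (N:ℝ)).const_add α).mul_const (V x)
    have hB : HasDerivAt (fun u : ℝ => ((N:ℝ) + α) * u ^ (N:ℝ) * V (u • x))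
        ((((N:ℝ) + α) * ((N:ℝ) * s ^ ((N:ℝ) - 1))) * V (s • x)
          + (((N:ℝ) + α) * s ^ (N:ℝ)) * fderiv ℝ V (s • x) x) s :=
      (h2.const_mul ((N:ℝ) + α)).mul hVc
    have hC : HasDerivAt (fun u : ℝ => (u ^ ((N:ℝ) + α) - 1) * fderiv ℝ V x x)
        ((((N:ℝ) + α) * s ^ ((N:ℝ) + α - 1)) * fderiv ℝ V x x) s :=
      (h1.sub_const 1).mul_const _
    have hE0 : HasDerivAt (fun u : ℝ => 2 + α - ((N:ℝ) + α) * u ^ ((N:ℝ) - 2)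
          + ((N:ℝ) - 2) * u ^ ((N:ℝ) + α))
        (-(((N:ℝ) + α) * (((N:ℝ) - 2) * s ^ ((N:ℝ) - 2 - 1)))
          + ((N:ℝ) - 2) * (((N:ℝ) + α) * s ^ ((N:ℝ) + α - 1))) s :=
      ((h3.const_mul ((N:ℝ) + α)).const_sub (2 + α)).add (h1.const_mul ((N:ℝ) - 2))
    have hE : HasDerivAt (fun u : ℝ => K * gfun N α u)
        (K * (-(((N:ℝ) + α) * (((N:ℝ) - 2) * s ^ ((N:ℝ) - 2 - 1)))
          + ((N:ℝ) - 2) * (((N:ℝ) + α) * s ^ ((N:ℝ) + α - 1)))) s := by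
      simpa [gfun] using hE0.const_mul K
    have htot := ((hA.sub hB).add hC).add hE
    have e1 : fderiv ℝ V (s • x) (s • x) = s * fderiv ℝ V (s • x) x := by
      simpa using (fderiv ℝ V (s • x)).map_smul s x
    have ha : (0:ℝ) < s ^ α := Real.rpow_pos_of_pos hs α
    have r1 : s ^ ((N:ℝ) - 1) = s ^ ((N:ℝ) - 3) * s * s := by
      rw [show s ^ ((N:ℝ) - 3) * s * s = s ^ (((N:ℝ) - 3) + 1 + 1) from by
        rw [Real.rpow_add hs, Real.rpow_add hs, Real.rpow_one]]
      congr 1; ring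
    have r2 : s ^ (N:ℝ) = s ^ ((N:ℝ) - 3) * s * s * s := by
      rw [show s ^ ((N:ℝ) - 3) * s * s * s = s ^ (((N:ℝ) - 3) + 1 + 1 + 1) from by
        rw [Real.rpow_add hs, Real.rpow_add hs, Real.rpow_add hs, Real.rpow_one]]
      congr 1; ring
    have r3 : s ^ ((N:ℝ) + α - 1) = s ^ ((N:ℝ) - 3) * s * s * s ^ α := by
      rw [show s ^ ((N:ℝ) - 3) * s * s * s ^ α = s ^ (((N:ℝ) - 3) + 1 + 1 + α) from by
        rw [Real.rpow_add hs, Real.rpow_add hs, Real.rpow_add hs, Real.rpow_one]]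
      congr 1; ring
    have r4 : s ^ (α + 2) = s ^ α * s * s := by
      rw [show s ^ α * s * s = s ^ (α + 1 + 1) from by
        rw [Real.rpow_add hs, Real.rpow_add hs, Real.rpow_one]]
      congr 1; ring
    have r5 : s ^ ((N:ℝ) - 2 - 1) = s ^ ((N:ℝ) - 3) := by
      rw [show (N:ℝ) - 2 - 1 = (N:ℝ) - 3 by ring]
    refine htot.congr_deriv ?_
    simp only [hφ, hK, one_smul, Real.one_rpow]
    rw [e1, r1, r2, r3, r4, r5]
    field_simp
    ring
  have hcont : ContinuousOn g (Set.Ici 0) := by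
    intro s hs
    have c1 : ContinuousAt (fun u : ℝ => u ^ ((N:ℝ) + α)) s :=
      Real.continuousAt_rpow_const s _ (Or.inr (by linarith))
    have c2 : ContinuousAt (fun u : ℝ => u ^ (N:ℝ)) s :=
      Real.continuousAt_rpow_const s _ (Or.inr (by linarith))
    have c3 : ContinuousAt (fun u : ℝ => u ^ ((N:ℝ) - 2)) s :=
      Real.continuousAt_rpow_const s _ (Or.inr (by linarith))
    have cV : ContinuousAt (fun u : ℝ => V (u • x)) s := by
      have : Continuous fun u : ℝ => V (u • x) := by fun_prop
      exact this.continuousAt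
    have hca : ContinuousAt (fun u : ℝ =>
        (α + (N:ℝ) * u ^ ((N:ℝ) + α)) * V x - ((N:ℝ) + α) * u ^ (N:ℝ) * V (u • x)
          + (u ^ ((N:ℝ) + α) - 1) * fderiv ℝ V x x
          + K * (2 + α - ((N:ℝ) + α) * u ^ ((N:ℝ) - 2)
            + ((N:ℝ) - 2) * u ^ ((N:ℝ) + α))) s := by
      exact ((((continuousAt_const.add (continuousAt_const.mul c1)).mul
          continuousAt_const).sub ((continuousAt_const.mul c2).mul cV)).add
          ((c1.sub continuousAt_const).mul continuousAt_const)).add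
          (continuousAt_const.mul (((continuousAt_const.sub
            (continuousAt_const.mul c3)).add (continuousAt_const.mul c1))))
    have : ContinuousAt g s := by
      rw [hg]; simp only [gfun]; exact hca
    exact this.continuousWithinAt
  have hDon : DifferentiableOn ℝ g (Set.Ioi 0) := fun s hs =>
    ((hderiv s hs).differentiableAt.differentiableWithinAt)
  have key1 : AntitoneOn g (Set.Icc 0 1) := by
    apply antitoneOn_of_deriv_nonpos (convex_Icc 0 1)
      (hcont.mono Set.Icc_subset_Ici_self)
    · rw [interior_Icc]; exact hDon.mono (fun u hu => hu.1)
    · intro s hs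
      rw [interior_Icc] at hs
      rw [(hderiv s hs.1).deriv]
      have hφle : φ 1 ≤ φ s := hanti (Set.mem_Ioi.2 hs.1) (Set.mem_Ioi.2 one_pos) hs.2.le
      have hpos : (0:ℝ) ≤ ((N:ℝ) + α) * s ^ ((N:ℝ) + α - 1) :=
        le_of_lt (mul_pos hNα (Real.rpow_pos_of_pos hs.1 _))
      exact mul_nonpos_of_nonneg_of_nonpos hpos (by linarith)
  have key2 : MonotoneOn g (Set.Ici 1) := by
    apply monotoneOn_of_deriv_nonneg (convex_Ici 1)
      (hcont.mono (Set.Ici_subset_Ici.2 zero_le_one))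
    · rw [interior_Ici]; exact hDon.mono (fun u hu => Set.mem_Ioi.2 (lt_trans one_pos (Set.mem_Ioi.1 hu)))
    · intro s hs
      rw [interior_Ici] at hs
      have hs0 : (0:ℝ) < s := lt_trans one_pos hs
      rw [(hderiv s hs0).deriv]
      have hφle : φ s ≤ φ 1 := hanti (Set.mem_Ioi.2 one_pos) (Set.mem_Ioi.2 hs0) hs.le
      have hpos : (0:ℝ) ≤ ((N:ℝ) + α) * s ^ ((N:ℝ) + α - 1) :=
        le_of_lt (mul_pos hNα (Real.rpow_pos_of_pos hs0 _))
      exact mul_nonneg hpos (by linarith)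
  have hgt : 0 ≤ g t := by
    rcases le_total t 1 with h | h
    · have := key1 (Set.mem_Icc.2 ⟨ht, h⟩) (Set.mem_Icc.2 ⟨zero_le_one, le_rfl⟩) h
      linarith [hg1]
    · have := key2 (Set.mem_Ici.2 le_rfl) (Set.mem_Ici.2 h) h
      linarith [hg1]
  have hgt' : 0 ≤ (α + (N:ℝ) * t ^ ((N:ℝ) + α)) * V x
      - ((N:ℝ) + α) * t ^ (N:ℝ) * V (t • x)
      + (t ^ ((N:ℝ) + α) - 1) * fderiv ℝ V x x + K * gfun N α t := by
    simpa [hg] using hgt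
  have hKg : -(((N:ℝ) - 2) ^ 2 * θ * gfun N α t) / (4 * ‖x‖ ^ 2)
      = -(K * gfun N α t) := by
    rw [hK]; ring
  linarith [hgt', hKg]
end

section
/- Let N≥3 be an integer, α∈(0,N), and let V:ℝ^N→ℝ satisfy (V1), (V2) and (V3) with some parameter θ∈[0,1). Then ∇V(x)·x → 0 as |x|→∞. -/
open MeasureTheory Real Filter Topology

open intervalIntegral in
lemma ev_cocompact_exists {N : ℕ} {p : Pt N → Prop}
    (h : ∀ᶠ y in cocompact (Pt N), p y) : ∃ R : ℝ, ∀ y, R < ‖y‖ → p y := by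
  rw [Filter.eventually_iff, Filter.mem_cocompact] at h
  obtain ⟨K, hK, hKs⟩ := h
  obtain ⟨r, hr⟩ := hK.isBounded.subset_closedBall 0
  refine ⟨r, fun y hy => hKs ?_⟩
  intro hyK
  have := hr hyK
  rw [Metric.mem_closedBall, dist_zero_right] at this
  linarith

lemma hasDerivAt_gaux {N : ℕ} {V : Pt N → ℝ} (hV : ContDiff ℝ 1 V)
    (x : Pt N) {t : ℝ} (ht : 0 < t) :
    HasDerivAt (fun s : ℝ => s ^ (N:ℝ) * V (s • x))
      (t ^ ((N:ℝ) - 1) * ((N:ℝ) * V (t • x) + fderiv ℝ V (t • x) (t • x))) t := by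
  have hsm : HasDerivAt (fun s : ℝ => s • x) x t := by
    simpa using (hasDerivAt_id t).smul_const x
  have hVd : HasFDerivAt V (fderiv ℝ V (t • x)) (t • x) :=
    (hV.differentiable one_ne_zero (t • x)).hasFDerivAt
  have h2 : HasDerivAt (fun s : ℝ => V (s • x)) (fderiv ℝ V (t • x) x) t :=
    hVd.comp_hasDerivAt t hsm
  have h1 : HasDerivAt (fun s : ℝ => s ^ (N:ℝ)) ((N:ℝ) * t ^ ((N:ℝ) - 1)) t :=
    Real.hasDerivAt_rpow_const (Or.inl ht.ne')
  have h3 : HasDerivAt (fun s : ℝ => s ^ (N:ℝ) * V (s • x)) _ t := h1.mul h2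
  convert h3 using 1
  have hmap : fderiv ℝ V (t • x) (t • x) = t * fderiv ℝ V (t • x) x := by
    rw [(fderiv ℝ V (t • x)).map_smul, smul_eq_mul]
  have htN : t ^ ((N:ℝ) - 1) * t = t ^ (N:ℝ) := by
    have := Real.rpow_natCast t N
    have h4 := Real.rpow_add ht ((N:ℝ) - 1) 1
    rw [Real.rpow_one] at h4
    rw [← h4]; ring_nf
  rw [hmap, ← htN]; ring

open intervalIntegral in
lemma ratio_bounds {Nr α a b : ℝ} (hN : 3 ≤ Nr) (hα : 0 < α)
    (ha : 0 < a) (hab : a ≤ b) :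
    Nr * (b ^ (-α) * (b ^ (Nr+α) - a ^ (Nr+α))) ≤ (Nr+α) * (b ^ Nr - a ^ Nr) ∧
    (Nr+α) * (b ^ Nr - a ^ Nr) ≤ Nr * (a ^ (-α) * (b ^ (Nr+α) - a ^ (Nr+α))) := by
  have hN0 : (0:ℝ) < Nr := by linarith
  have hNα : (0:ℝ) < Nr + α := by linarith
  have h1 : (-1:ℝ) < Nr - 1 := by linarith
  have h2 : (-1:ℝ) < Nr + α - 1 := by linarith
  have e1 : ∫ t in a..b, t ^ (Nr - 1) = (b ^ Nr - a ^ Nr) / Nr := by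
    rw [integral_rpow (Or.inl h1)]; ring_nf
  have e2 : ∫ t in a..b, t ^ (Nr + α - 1) = (b ^ (Nr+α) - a ^ (Nr+α)) / (Nr+α) := by
    rw [integral_rpow (Or.inl h2)]; ring_nf
  have int1 : IntervalIntegrable (fun t : ℝ => t ^ (Nr - 1)) volume a b :=
    intervalIntegrable_rpow' h1
  have int2 : IntervalIntegrable (fun t : ℝ => t ^ (Nr + α - 1)) volume a b :=
    intervalIntegrable_rpow' h2
  constructor
  · have hmono : ∀ t ∈ Set.Icc a b,
        b ^ (-α) * t ^ (Nr + α - 1) ≤ t ^ (Nr - 1) := by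
      intro t htm
      have ht0 : 0 < t := lt_of_lt_of_le ha htm.1
      have hsplit : t ^ (Nr - 1) = t ^ (-α) * t ^ (Nr + α - 1) := by
        rw [← Real.rpow_add ht0]; ring_nf
      rw [hsplit]
      have h : b ^ (-α) ≤ t ^ (-α) :=
        Real.rpow_le_rpow_of_nonpos ht0 htm.2 (by linarith)
      exact mul_le_mul_of_nonneg_right h (Real.rpow_nonneg ht0.le _)
    have h := intervalIntegral.integral_mono_on hab (int2.const_mul _) int1 hmono
    rw [intervalIntegral.integral_const_mul, e1, e2] at h
    rw [← mul_div_assoc, div_le_div_iff₀ hNα hN0] at h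
    linarith only [h]
  · have hmono : ∀ t ∈ Set.Icc a b,
        t ^ (Nr - 1) ≤ a ^ (-α) * t ^ (Nr + α - 1) := by
      intro t htm
      have ht0 : 0 < t := lt_of_lt_of_le ha htm.1
      have hsplit : t ^ (Nr - 1) = t ^ (-α) * t ^ (Nr + α - 1) := by
        rw [← Real.rpow_add ht0]; ring_nf
      rw [hsplit]
      have h : t ^ (-α) ≤ a ^ (-α) :=
        Real.rpow_le_rpow_of_nonpos ha htm.1 (by linarith)
      exact mul_le_mul_of_nonneg_right h (Real.rpow_nonneg ht0.le _)
    have h := intervalIntegral.integral_mono_on hab int1 (int2.const_mul _) hmono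
    rw [intervalIntegral.integral_const_mul, e1, e2] at h
    rw [← mul_div_assoc, div_le_div_iff₀ hN0 hNα] at h
    linarith only [h]

open intervalIntegral in
lemma key_bounds {N : ℕ} (hN : 3 ≤ N) {α θ : ℝ} (hα : 0 < α)
    {V : Pt N → ℝ} (hV : ContDiff ℝ 1 V)
    {x : Pt N} (hx : x ≠ 0)
    (hmono : AntitoneOn (fun t : ℝ =>
      ((N : ℝ) * V (t • x) + fderiv ℝ V (t • x) (t • x)) / t ^ α
        + ((N : ℝ) - 2) ^ 3 * θ / (4 * t ^ (α + 2) * ‖x‖ ^ 2)) (Set.Ioi (0 : ℝ)))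
    {a b : ℝ} (ha : 0 < a) (hab : a ≤ b) :
    (((N : ℝ) * V (b • x) + fderiv ℝ V (b • x) (b • x)) / b ^ α
        + ((N : ℝ) - 2) ^ 3 * θ / (4 * b ^ (α + 2) * ‖x‖ ^ 2))
        * ((b ^ ((N:ℝ)+α) - a ^ ((N:ℝ)+α)) / ((N:ℝ)+α))
        - (((N:ℝ)-2) ^ 3 * θ / 4 / ‖x‖ ^ 2) * ((b ^ ((N:ℝ)-2) - a ^ ((N:ℝ)-2)) / ((N:ℝ)-2))
      ≤ b ^ (N:ℝ) * V (b • x) - a ^ (N:ℝ) * V (a • x) ∧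
    b ^ (N:ℝ) * V (b • x) - a ^ (N:ℝ) * V (a • x)
      ≤ (((N : ℝ) * V (a • x) + fderiv ℝ V (a • x) (a • x)) / a ^ α
        + ((N : ℝ) - 2) ^ 3 * θ / (4 * a ^ (α + 2) * ‖x‖ ^ 2))
        * ((b ^ ((N:ℝ)+α) - a ^ ((N:ℝ)+α)) / ((N:ℝ)+α))
        - (((N:ℝ)-2) ^ 3 * θ / 4 / ‖x‖ ^ 2) * ((b ^ ((N:ℝ)-2) - a ^ ((N:ℝ)-2)) / ((N:ℝ)-2)) := by
  have hN3 : (3:ℝ) ≤ (N:ℝ) := by exact_mod_cast hN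
  have hb : 0 < b := lt_of_lt_of_le ha hab
  have hxn : (0:ℝ) < ‖x‖ ^ 2 := pow_pos (norm_pos_iff.mpr hx) 2
  set φ : ℝ → ℝ := fun t =>
      ((N : ℝ) * V (t • x) + fderiv ℝ V (t • x) (t • x)) / t ^ α
        + ((N : ℝ) - 2) ^ 3 * θ / (4 * t ^ (α + 2) * ‖x‖ ^ 2) with hφ
  set C' : ℝ := ((N:ℝ)-2) ^ 3 * θ / 4 / ‖x‖ ^ 2 with hC'
  set d : ℝ → ℝ := fun t => t ^ ((N:ℝ) - 1) * ((N:ℝ) * V (t • x) + fderiv ℝ V (t • x) (t • x))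
    with hd
  -- pointwise identity
  have hident : ∀ t : ℝ, 0 < t → d t = t ^ ((N:ℝ) + α - 1) * φ t - C' * t ^ ((N:ℝ) - 3) := by
    intro t ht
    have htα : (0:ℝ) < t ^ α := Real.rpow_pos_of_pos ht α
    have htα2 : (0:ℝ) < t ^ (α + 2) := Real.rpow_pos_of_pos ht _
    have r1 : t ^ ((N:ℝ) + α - 1) = t ^ ((N:ℝ) - 1) * t ^ α := by
      rw [← Real.rpow_add ht]; ring_nf
    have r2 : t ^ ((N:ℝ) + α - 1) = t ^ ((N:ℝ) - 3) * t ^ (α + 2) := by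
      rw [← Real.rpow_add ht]; ring_nf
    have t1 : t ^ ((N:ℝ)+α-1) * (((N:ℝ) * V (t • x) + fderiv ℝ V (t • x) (t • x)) / t ^ α)
        = t ^ ((N:ℝ)-1) * ((N:ℝ) * V (t • x) + fderiv ℝ V (t • x) (t • x)) := by
      rw [r1]; field_simp [htα.ne']
    have t2 : t ^ ((N:ℝ)+α-1) * (((N:ℝ)-2) ^ 3 * θ / (4 * t ^ (α+2) * ‖x‖ ^ 2))
        = ((N:ℝ)-2) ^ 3 * θ / 4 / ‖x‖ ^ 2 * t ^ ((N:ℝ)-3) := by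
      rw [r2]; field_simp [htα2.ne', hxn.ne']
    simp only [hd, hφ, hC']
    conv_rhs => rw [mul_add, t1, t2]
    ring
  -- FTC
  have hderiv : ∀ t ∈ Set.uIcc a b, HasDerivAt (fun s : ℝ => s ^ (N:ℝ) * V (s • x)) (d t) t := by
    intro t htm
    rw [Set.uIcc_of_le hab] at htm
    exact hasDerivAt_gaux hV x (lt_of_lt_of_le ha htm.1)
  have hcont : ContinuousOn d (Set.uIcc a b) := by
    rw [Set.uIcc_of_le hab]
    have h1 : ContinuousOn (fun t : ℝ => t ^ ((N:ℝ) - 1)) (Set.Icc a b) := by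
      intro t htm
      exact (Real.continuousAt_rpow_const t _ (Or.inl (lt_of_lt_of_le ha htm.1).ne')).continuousWithinAt
    have h2 : Continuous (fun t : ℝ => (N:ℝ) * V (t • x) + fderiv ℝ V (t • x) (t • x)) := by
      have hsm : Continuous (fun t : ℝ => t • x) := continuous_id.smul continuous_const
      have hf : Continuous (fun y : Pt N => fderiv ℝ V y) := hV.continuous_fderiv one_ne_zero
      exact (continuous_const.mul (hV.continuous.comp hsm)).add
        ((hf.comp hsm).clm_apply hsm)
    exact h1.mul h2.continuousOn
  have hint_d : IntervalIntegrable d volume a b := hcont.intervalIntegrable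
  have hFTC : ∫ t in a..b, d t = b ^ (N:ℝ) * V (b • x) - a ^ (N:ℝ) * V (a • x) :=
    integral_eq_sub_of_hasDerivAt hderiv hint_d
  have hq1 : (-1:ℝ) < (N:ℝ) + α - 1 := by linarith
  have hq2 : (-1:ℝ) < (N:ℝ) - 3 := by linarith
  have int1 : IntervalIntegrable (fun t : ℝ => t ^ ((N:ℝ) + α - 1)) volume a b :=
    intervalIntegrable_rpow' hq1
  have int2 : IntervalIntegrable (fun t : ℝ => t ^ ((N:ℝ) - 3)) volume a b :=
    intervalIntegrable_rpow' hq2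
  have e1 : ∫ t in a..b, t ^ ((N:ℝ) + α - 1) = (b ^ ((N:ℝ)+α) - a ^ ((N:ℝ)+α)) / ((N:ℝ)+α) := by
    rw [integral_rpow (Or.inl hq1)]; ring_nf
  have e2 : ∫ t in a..b, t ^ ((N:ℝ) - 3) = (b ^ ((N:ℝ)-2) - a ^ ((N:ℝ)-2)) / ((N:ℝ)-2) := by
    rw [integral_rpow (Or.inl hq2)]; ring_nf
  constructor
  · -- lower bound: φ b * ... - C' * ... ≤ g b - g a
    have hptw : ∀ t ∈ Set.Icc a b,
        φ b * t ^ ((N:ℝ) + α - 1) - C' * t ^ ((N:ℝ) - 3) ≤ d t := by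
      intro t htm
      have ht : 0 < t := lt_of_lt_of_le ha htm.1
      rw [hident t ht]
      have hφle : φ b ≤ φ t := hmono (Set.mem_Ioi.mpr ht) (Set.mem_Ioi.mpr hb) htm.2
      have := mul_le_mul_of_nonneg_right hφle (Real.rpow_nonneg ht.le ((N:ℝ) + α - 1))
      nlinarith [this]
    have hintl : IntervalIntegrable
        (fun t : ℝ => φ b * t ^ ((N:ℝ) + α - 1) - C' * t ^ ((N:ℝ) - 3)) volume a b :=
      (int1.const_mul _).sub (int2.const_mul _)
    have := integral_mono_on hab hintl hint_d hptw
    rw [hFTC] at this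
    rw [intervalIntegral.integral_sub (int1.const_mul _) (int2.const_mul _)] at this
    rw [intervalIntegral.integral_const_mul, intervalIntegral.integral_const_mul, e1, e2] at this
    exact this
  · have hptw : ∀ t ∈ Set.Icc a b,
        d t ≤ φ a * t ^ ((N:ℝ) + α - 1) - C' * t ^ ((N:ℝ) - 3) := by
      intro t htm
      have ht : 0 < t := lt_of_lt_of_le ha htm.1
      rw [hident t ht]
      have hφle : φ t ≤ φ a := hmono (Set.mem_Ioi.mpr ha) (Set.mem_Ioi.mpr ht) htm.1
      have := mul_le_mul_of_nonneg_right hφle (Real.rpow_nonneg ht.le ((N:ℝ) + α - 1))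
      nlinarith [this]
    have hintu : IntervalIntegrable
        (fun t : ℝ => φ a * t ^ ((N:ℝ) + α - 1) - C' * t ^ ((N:ℝ) - 3)) volume a b :=
      (int1.const_mul _).sub (int2.const_mul _)
    have := integral_mono_on hab hint_d hintu hptw
    rw [hFTC] at this
    rw [intervalIntegral.integral_sub (int1.const_mul _) (int2.const_mul _)] at this
    rw [intervalIntegral.integral_const_mul, intervalIntegral.integral_const_mul, e1, e2] at this
    exact this

set_option maxHeartbeats 2000000 in
/-- under (V1), (V2), (V3), ∇V(x)·x → 0 as |x| → ∞. -/
theorem stmt3 (N : ℕ) (hN : 3 ≤ N) (α θ : ℝ) (hα : 0 < α) (hαN : α < N)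
    (hθ : θ ∈ Set.Ico (0:ℝ) 1) (V : Pt N → ℝ) (Vinf : ℝ)
    (hV1 : condV1 N V Vinf) (hV2 : condV2 N V Vinf) (hV3 : condV3 N α θ V) :
    Tendsto (fun x : Pt N => fderiv ℝ V x x) (cocompact (Pt N)) (𝓝 0) := by
  obtain ⟨hVc, hVnn, hVinf_pos, hVtend⟩ := hV1
  obtain ⟨hVC1, hmonoV⟩ := hV3
  have hθ0 : (0:ℝ) ≤ θ := hθ.1
  have hN3 : (3:ℝ) ≤ (N:ℝ) := by exact_mod_cast hN
  have hN0 : (0:ℝ) < (N:ℝ) := by linarith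
  have hNα : (0:ℝ) < (N:ℝ) + α := by linarith
  have hN2 : (0:ℝ) < (N:ℝ) - 2 := by linarith
  set C : ℝ := ((N:ℝ)-2) ^ 3 * θ / 4 with hCdef
  have hC : 0 ≤ C := by
    apply div_nonneg _ (by norm_num)
    exact mul_nonneg (pow_nonneg (by linarith) 3) hθ0
  rw [Metric.tendsto_nhds]
  intro ε hε
  have hNV : (0:ℝ) < (N:ℝ) * Vinf + 1 := by positivity
  set ε' : ℝ := ε / (4 * ((N:ℝ) * Vinf + 1)) with hε'def
  have hε' : 0 < ε' := by positivity
  have hcont : ContinuousAt (fun y : ℝ => y ^ (-α)) 1 :=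
    Real.continuousAt_rpow_const 1 (-α) (Or.inl one_ne_zero)
  obtain ⟨δ, hδ, hδprop⟩ := Metric.continuousAt_iff.mp hcont ε' hε'
  set d0 : ℝ := min δ 1 / 2 with hd0
  have hd0pos : 0 < d0 := by
    rw [hd0]; have := lt_min hδ one_pos; linarith
  have hd0ltδ : d0 < δ := by
    rw [hd0]; have := min_le_left δ 1; linarith
  have hd0le : d0 ≤ 1/2 := by
    rw [hd0]; have := min_le_right δ 1; linarith
  set a : ℝ := 1 - d0 with hadef
  set b : ℝ := 1 + d0 with hbdef
  have ha0 : 0 < a := by rw [hadef]; linarith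
  have ha1 : a < 1 := by rw [hadef]; linarith
  have hb1 : 1 < b := by rw [hbdef]; linarith
  have hb0 : 0 < b := by linarith
  have haε : a ^ (-α) - 1 < ε' := by
    have h := hδprop (x := a) (by rw [Real.dist_eq, hadef]; rw [abs_of_nonpos (by linarith)]; simpa using hd0ltδ)
    rw [Real.dist_eq, Real.one_rpow] at h
    calc a ^ (-α) - 1 ≤ |a ^ (-α) - 1| := le_abs_self _
    _ < ε' := h
  have hbε : 1 - b ^ (-α) < ε' := by
    have h := hδprop (x := b) (by rw [Real.dist_eq, hbdef]; rw [abs_of_nonneg (by linarith)]; simpa using hd0ltδ)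
    rw [Real.dist_eq, Real.one_rpow] at h
    calc 1 - b ^ (-α) ≤ |b ^ (-α) - 1| := by rw [abs_sub_comm]; exact le_abs_self _
    _ < ε' := h
  have haα1 : 1 ≤ a ^ (-α) := Real.one_le_rpow_of_pos_of_le_one_of_nonpos ha0 ha1.le (by linarith)
  have hbα1 : b ^ (-α) ≤ 1 := Real.rpow_le_one_of_one_le_of_nonpos hb1.le (by linarith)
  have haN : a ^ ((N:ℝ)+α) < 1 := Real.rpow_lt_one ha0.le ha1 hNα
  have hbN : 1 < b ^ ((N:ℝ)+α) := (Real.one_lt_rpow_iff_of_pos hb0).mpr (Or.inl ⟨hb1, hNα⟩)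
  set K : ℝ := ((N:ℝ)+α) / (1 - a ^ ((N:ℝ)+α)) with hKdef
  set L : ℝ := ((N:ℝ)+α) / (b ^ ((N:ℝ)+α) - 1) with hLdef
  have hKpos : 0 < K := div_pos hNα (by linarith)
  have hLpos : 0 < L := div_pos hNα (by linarith)
  have hbNr : (0:ℝ) < b ^ (N:ℝ) := Real.rpow_pos_of_pos hb0 _
  set ε₁ : ℝ := min (ε / (4 * ((N:ℝ) + K))) (ε / (4 * (L * b ^ (N:ℝ) + 1))) with hε₁def
  have hε₁pos : 0 < ε₁ := lt_min (by positivity) (by positivity)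
  have hev : ∀ᶠ y in cocompact (Pt N), |V y - Vinf| < ε₁ := by
    have h := Metric.tendsto_nhds.mp hVtend ε₁ hε₁pos
    simpa [Real.dist_eq] using h
  obtain ⟨R₁, hR₁⟩ := ev_cocompact_exists hev
  set T₁ : ℝ := K * C / ((N:ℝ) - 2) with hT₁def
  have hT₁0 : 0 ≤ T₁ := div_nonneg (mul_nonneg hKpos.le hC) hN2.le
  set R : ℝ := max (max (R₁ / a) (max R₁ 1)) (max (4 * T₁ / ε) (4 * C / ε)) with hRdef
  have hbig : ∀ᶠ x in cocompact (Pt N), R < ‖x‖ :=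
    tendsto_norm_cocompact_atTop.eventually (eventually_gt_atTop R)
  filter_upwards [hbig] with x hxR
  rw [Real.dist_eq, sub_zero]
  -- basic facts about x
  have hx1 : 1 < ‖x‖ :=
    lt_of_le_of_lt (le_trans (le_trans (le_max_right R₁ 1) (le_max_right _ _)) (le_max_left _ _)) hxR
  have hxpos : (0:ℝ) < ‖x‖ := by linarith
  have hx0 : x ≠ 0 := by
    intro h; rw [h, norm_zero] at hx1; linarith
  have hxn : (0:ℝ) < ‖x‖ ^ 2 := by positivity
  have hxsq : ‖x‖ ≤ ‖x‖ ^ 2 := by nlinarith only [hx1, hxpos]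
  -- V estimates
  have hVx : |V x - Vinf| < ε₁ := by
    apply hR₁
    exact lt_of_le_of_lt (le_trans (le_trans (le_max_left R₁ 1) (le_max_right _ _)) (le_max_left _ _)) hxR
  have hVax : |V (a • x) - Vinf| < ε₁ := by
    apply hR₁
    rw [norm_smul, Real.norm_eq_abs, abs_of_pos ha0]
    have h1 : R₁ / a < ‖x‖ :=
      lt_of_le_of_lt (le_trans (le_max_left _ _) (le_max_left _ _)) hxR
    rw [div_lt_iff₀ ha0] at h1
    linarith only [h1]
  have hVbx : |V (b • x) - Vinf| < ε₁ := by
    apply hR₁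
    rw [norm_smul, Real.norm_eq_abs, abs_of_pos hb0]
    have h1 : R₁ < ‖x‖ :=
      lt_of_le_of_lt (le_trans (le_trans (le_max_left R₁ 1) (le_max_right _ _)) (le_max_left _ _)) hxR
    calc R₁ < ‖x‖ := h1
    _ = 1 * ‖x‖ := (one_mul _).symm
    _ ≤ b * ‖x‖ := mul_le_mul_of_nonneg_right hb1.le hxpos.le
  -- C-term bounds
  have hCx1 : T₁ / ‖x‖ ^ 2 < ε / 4 := by
    have h1 : 4 * T₁ / ε < ‖x‖ :=
      lt_of_le_of_lt (le_trans (le_max_left _ _) (le_max_right _ _)) hxR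
    rw [div_lt_iff₀ hε] at h1
    rw [div_lt_iff₀ hxn]
    have h2 : ε * ‖x‖ ≤ ε * ‖x‖ ^ 2 := mul_le_mul_of_nonneg_left hxsq hε.le
    linarith only [h1, h2]
  have hCx2 : C / ‖x‖ ^ 2 < ε / 4 := by
    have h1 : 4 * C / ε < ‖x‖ :=
      lt_of_le_of_lt (le_trans (le_max_right _ _) (le_max_right _ _)) hxR
    rw [div_lt_iff₀ hε] at h1
    rw [div_lt_iff₀ hxn]
    have h2 : ε * ‖x‖ ≤ ε * ‖x‖ ^ 2 := mul_le_mul_of_nonneg_left hxsq hε.le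
    linarith only [h1, h2]
  -- V estimates as inequalities
  have hVxle : V x ≤ Vinf := hV2 x
  have hVxge : Vinf - ε₁ ≤ V x := by have := abs_lt.mp hVx; linarith [this.1]
  have hVaxge : Vinf - ε₁ ≤ V (a • x) := by have := abs_lt.mp hVax; linarith [this.1]
  have hVbxge : Vinf - ε₁ ≤ V (b • x) := by have := abs_lt.mp hVbx; linarith [this.1]
  have hm := hmonoV x hx0
  -- key bound on [a, 1]
  have hlow1 := (key_bounds hN hα hVC1 hx0 hm ha0 ha1.le).1
  simp only [Real.one_rpow, one_smul, one_mul, div_one, mul_one] at hlow1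
  -- key bound on [1, b]
  have hup2 := (key_bounds hN hα hVC1 hx0 hm one_pos hb1.le).2
  simp only [Real.one_rpow, one_smul, one_mul, div_one, mul_one] at hup2
  have hCC1 : ((N:ℝ)-2) ^ 3 * θ / (4 * ‖x‖ ^ 2) = C / ‖x‖ ^ 2 := by
    rw [hCdef, div_div]
  have hCC2 : ((N:ℝ)-2) ^ 3 * θ / 4 / ‖x‖ ^ 2 = C / ‖x‖ ^ 2 := by
    rw [hCdef]
  rw [hCC1, hCC2] at hlow1
  rw [hCC1, hCC2] at hup2
  -- ratio bounds
  have hra := (ratio_bounds (a := a) (b := 1) hN3 hα ha0 ha1.le).2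
  simp only [Real.one_rpow] at hra
  have hrb := (ratio_bounds (a := 1) (b := b) hN3 hα one_pos hb1.le).1
  simp only [Real.one_rpow] at hrb
  have hKa : K * (1 - a ^ (N:ℝ)) ≤ (N:ℝ) * a ^ (-α) := by
    rw [hKdef, div_mul_eq_mul_div, div_le_iff₀ (by linarith : (0:ℝ) < 1 - a ^ ((N:ℝ)+α))]
    linarith only [hra]
  have hLb : (N:ℝ) * b ^ (-α) ≤ L * (b ^ (N:ℝ) - 1) := by
    rw [hLdef, div_mul_eq_mul_div, le_div_iff₀ (by linarith : (0:ℝ) < b ^ ((N:ℝ)+α) - 1)]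
    linarith only [hrb]
  -- power facts
  have haNr0 : (0:ℝ) < a ^ (N:ℝ) := Real.rpow_pos_of_pos ha0 _
  have haNr1 : a ^ (N:ℝ) ≤ 1 := Real.rpow_le_one ha0.le ha1.le hN0.le
  have haN2 : a ^ ((N:ℝ)-2) ≤ 1 := Real.rpow_le_one ha0.le ha1.le hN2.le
  have haN20 : (0:ℝ) ≤ a ^ ((N:ℝ)-2) := (Real.rpow_pos_of_pos ha0 _).le
  have hbN2 : 1 ≤ b ^ ((N:ℝ)-2) := Real.one_le_rpow hb1.le hN2.le
  have hCxnn : (0:ℝ) ≤ C / ‖x‖ ^ 2 := div_nonneg hC hxn.le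
  rw [abs_lt]
  constructor
  · -- lower bound : -ε < W
    have hQL : ((b ^ ((N:ℝ)+α) - 1) / ((N:ℝ)+α)) * L = 1 := by
      rw [hLdef]; field_simp
      exact div_self (by linarith : b ^ ((N:ℝ)+α) - 1 ≠ 0)
    have hS' : (0:ℝ) ≤ (C / ‖x‖ ^ 2) * ((b ^ ((N:ℝ)-2) - 1) / ((N:ℝ)-2)) :=
      mul_nonneg hCxnn (div_nonneg (by linarith) hN2.le)
    have h1 : b ^ (N:ℝ) * V (b • x) - V x ≤
        ((N:ℝ) * V x + fderiv ℝ V x x + C / ‖x‖ ^ 2) * ((b ^ ((N:ℝ)+α) - 1) / ((N:ℝ)+α)) := by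
      linarith only [hup2, hS']
    have h2 : (b ^ (N:ℝ) * V (b • x) - V x) * L ≤
        ((N:ℝ) * V x + fderiv ℝ V x x + C / ‖x‖ ^ 2) := by
      have h := mul_le_mul_of_nonneg_right h1 hLpos.le
      rw [mul_assoc, hQL, mul_one] at h
      exact h
    have h3 : (b ^ (N:ℝ) - 1) * Vinf - b ^ (N:ℝ) * ε₁ ≤ b ^ (N:ℝ) * V (b • x) - V x := by
      have hA : b ^ (N:ℝ) * (Vinf - ε₁) ≤ b ^ (N:ℝ) * V (b • x) :=
        mul_le_mul_of_nonneg_left hVbxge hbNr.le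
      linarith only [hA, hVxle]
    have h4 : ((b ^ (N:ℝ) - 1) * Vinf - b ^ (N:ℝ) * ε₁) * L ≤
        (b ^ (N:ℝ) * V (b • x) - V x) * L :=
      mul_le_mul_of_nonneg_right h3 hLpos.le
    have h5 : (N:ℝ) * b ^ (-α) * Vinf ≤ L * (b ^ (N:ℝ) - 1) * Vinf :=
      mul_le_mul_of_nonneg_right hLb hVinf_pos.le
    have h6 : (N:ℝ) * b ^ (-α) * Vinf - L * b ^ (N:ℝ) * ε₁ ≤
        (N:ℝ) * V x + fderiv ℝ V x x + C / ‖x‖ ^ 2 := by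
      linarith only [h2, h4, h5]
    have p1 : (N:ℝ) * Vinf * (1 - b ^ (-α)) < ε / 4 := by
      have hb' : (N:ℝ) * Vinf * (1 - b ^ (-α)) ≤ (N:ℝ) * Vinf * ε' :=
        mul_le_mul_of_nonneg_left hbε.le (by positivity)
      have hb'' : (N:ℝ) * Vinf * ε' < ε / 4 := by
        rw [hε'def, ← mul_div_assoc, div_lt_div_iff₀ (by positivity) (by norm_num)]
        linarith only [hε]
      linarith only [hb', hb'']
    have p2 : L * b ^ (N:ℝ) * ε₁ ≤ ε / 4 := by
      have h : ε₁ ≤ ε / (4 * (L * b ^ (N:ℝ) + 1)) := by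
        rw [hε₁def]; exact min_le_right _ _
      rw [le_div_iff₀ (by positivity)] at h
      linarith only [h, hε₁pos.le]
    have q1 : (N:ℝ) * V x ≤ (N:ℝ) * Vinf := mul_le_mul_of_nonneg_left hVxle hN0.le
    linarith only [h6, p1, p2, hCx2, q1, hε]
  · -- upper bound : W < ε
    have hQK : ((1 - a ^ ((N:ℝ)+α)) / ((N:ℝ)+α)) * K = 1 := by
      rw [hKdef]; field_simp
      exact div_self (by linarith : 1 - a ^ ((N:ℝ)+α) ≠ 0)
    have u0 : ((N:ℝ) * V x + fderiv ℝ V x x + C / ‖x‖ ^ 2) * ((1 - a ^ ((N:ℝ)+α)) / ((N:ℝ)+α))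
        ≤ V x - a ^ (N:ℝ) * V (a • x)
          + (C / ‖x‖ ^ 2) * ((1 - a ^ ((N:ℝ)-2)) / ((N:ℝ)-2)) := by
      linarith only [hlow1]
    have u1 : (N:ℝ) * V x + fderiv ℝ V x x + C / ‖x‖ ^ 2
        ≤ (V x - a ^ (N:ℝ) * V (a • x)
            + (C / ‖x‖ ^ 2) * ((1 - a ^ ((N:ℝ)-2)) / ((N:ℝ)-2))) * K := by
      have h := mul_le_mul_of_nonneg_right u0 hKpos.le
      rw [mul_assoc, hQK, mul_one] at h
      exact h
    have u2 : V x - a ^ (N:ℝ) * V (a • x)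
          + (C / ‖x‖ ^ 2) * ((1 - a ^ ((N:ℝ)-2)) / ((N:ℝ)-2))
        ≤ (1 - a ^ (N:ℝ)) * Vinf + ε₁ + (C / ‖x‖ ^ 2) / ((N:ℝ)-2) := by
      have hA : a ^ (N:ℝ) * (Vinf - ε₁) ≤ a ^ (N:ℝ) * V (a • x) :=
        mul_le_mul_of_nonneg_left hVaxge haNr0.le
      have hB : (C / ‖x‖ ^ 2) * ((1 - a ^ ((N:ℝ)-2)) / ((N:ℝ)-2))
          ≤ (C / ‖x‖ ^ 2) / ((N:ℝ)-2) := by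
        rw [← mul_div_assoc]
        apply (div_le_div_iff_of_pos_right hN2).mpr
        have h := mul_le_mul_of_nonneg_left (show (1:ℝ) - a ^ ((N:ℝ)-2) ≤ 1 by linarith only [haN20]) hCxnn
        linarith only [h]
      have hCa : a ^ (N:ℝ) * ε₁ ≤ ε₁ := by
        have h := mul_le_mul_of_nonneg_right haNr1 hε₁pos.le
        linarith only [h]
      linarith only [hA, hB, hCa, hVxle]
    have u3 : (N:ℝ) * V x + fderiv ℝ V x x + C / ‖x‖ ^ 2
        ≤ ((1 - a ^ (N:ℝ)) * Vinf + ε₁ + (C / ‖x‖ ^ 2) / ((N:ℝ)-2)) * K :=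
      le_trans u1 (mul_le_mul_of_nonneg_right u2 hKpos.le)
    have u4 : K * (1 - a ^ (N:ℝ)) * Vinf ≤ (N:ℝ) * a ^ (-α) * Vinf :=
      mul_le_mul_of_nonneg_right hKa hVinf_pos.le
    have u5 : K * ε₁ + (N:ℝ) * ε₁ ≤ ε / 4 := by
      have h : ε₁ ≤ ε / (4 * ((N:ℝ) + K)) := by
        rw [hε₁def]; exact min_le_left _ _
      rw [le_div_iff₀ (by positivity)] at h
      linarith only [h]
    have u6 : (C / ‖x‖ ^ 2) / ((N:ℝ)-2) * K ≤ ε / 4 := by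
      have e : (C / ‖x‖ ^ 2) / ((N:ℝ)-2) * K = T₁ / ‖x‖ ^ 2 := by
        rw [hT₁def]; field_simp
      rw [e]; exact hCx1.le
    have p1 : (N:ℝ) * Vinf * (a ^ (-α) - 1) < ε / 4 := by
      have hb' : (N:ℝ) * Vinf * (a ^ (-α) - 1) ≤ (N:ℝ) * Vinf * ε' :=
        mul_le_mul_of_nonneg_left haε.le (by positivity)
      have hb'' : (N:ℝ) * Vinf * ε' < ε / 4 := by
        rw [hε'def, ← mul_div_assoc, div_lt_div_iff₀ (by positivity) (by norm_num)]
        linarith only [hε]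
      linarith only [hb', hb'']
    have q2 : (N:ℝ) * (Vinf - ε₁) ≤ (N:ℝ) * V x := mul_le_mul_of_nonneg_left hVxge hN0.le
    linarith only [u3, u4, u5, u6, p1, q2, hCxnn, hε]
end

section
/- Let N≥3 be an integer, α∈(0,N), and let V:ℝ^N→ℝ satisfy (V1), (V2) and (V3) with some parameter θ∈[0,1). Then for every x∈ℝ^N∖{0}: −N·V(x) − (N−2)³θ/(4|x|²) ≤ ∇V(x)·x ≤ α·V_∞ + (N−2)²(2+α)θ/(4|x|²). -/
open MeasureTheory Real Filter Topology

/-- If `f` has derivative `f'` on `[a,b]` and `f' ≥ 0` on `(a,b)`, then `f a ≤ f b`. -/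
lemma mono_of_hasDerivAt_aux {f f' : ℝ → ℝ} {a b : ℝ}
    (h : ∀ t ∈ Set.Icc a b, HasDerivAt f (f' t) t)
    (h' : ∀ t ∈ Set.Ioo a b, 0 ≤ f' t) (hab : a ≤ b) : f a ≤ f b := by
  have hmono : MonotoneOn f (Set.Icc a b) := by
    apply monotoneOn_of_deriv_nonneg (convex_Icc a b)
    · exact fun t ht => (h t ht).continuousAt.continuousWithinAt
    · intro t ht
      rw [interior_Icc] at ht
      exact ((h t (Set.Ioo_subset_Icc_self ht)).differentiableAt).differentiableWithinAt
    · intro t ht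
      rw [interior_Icc] at ht
      rw [(h t (Set.Ioo_subset_Icc_self ht)).deriv]
      exact h' t ht
  exact hmono (Set.left_mem_Icc.2 hab) (Set.right_mem_Icc.2 hab) hab

/-- under (V1), (V2), (V3), pointwise bounds on ∇V(x)·x. -/
theorem stmt4 (N : ℕ) (hN : 3 ≤ N) (α θ : ℝ) (hα : 0 < α) (hαN : α < N)
    (hθ : θ ∈ Set.Ico (0:ℝ) 1) (V : Pt N → ℝ) (Vinf : ℝ)
    (hV1 : condV1 N V Vinf) (hV2 : condV2 N V Vinf) (hV3 : condV3 N α θ V) :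
    ∀ x : Pt N, x ≠ 0 →
      -(N : ℝ) * V x - ((N : ℝ) - 2) ^ 3 * θ / (4 * ‖x‖ ^ 2) ≤ fderiv ℝ V x x ∧
      fderiv ℝ V x x ≤ α * Vinf + ((N : ℝ) - 2) ^ 2 * (2 + α) * θ / (4 * ‖x‖ ^ 2) := by
  obtain ⟨hV1c, hVnn, hVinf_pos, _⟩ := hV1
  obtain ⟨hC1, hanti0⟩ := hV3
  intro x hx
  have hDiff : Differentiable ℝ V := hC1.differentiable one_ne_zero
  have hNR : (3:ℝ) ≤ (N:ℝ) := by exact_mod_cast hN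
  have hN2 : (0:ℝ) < (N:ℝ) - 2 := by linarith
  have hNα : (0:ℝ) < (N:ℝ) + α := by linarith
  have h1Nα : (1:ℝ) ≤ (N:ℝ) + α := by linarith
  have hxn : (0:ℝ) < ‖x‖ := norm_pos_iff.mpr hx
  have hx2 : (0:ℝ) < ‖x‖^2 := by positivity
  set c : ℝ := ((N:ℝ)-2)^3 * θ / (4 * ‖x‖^2) with hc_def
  set A : ℝ := (N:ℝ) * V x + fderiv ℝ V x x + c with hA_def
  set B : ℝ := A / ((N:ℝ)+α) with hB_def
  set c' : ℝ := c / ((N:ℝ)-2) with hc'_def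
  set S : ℝ → ℝ := fun t => (N:ℝ) * V (t•x) + (fderiv ℝ V (t•x)) (t•x) with hS_def
  clear_value c A B c' S
  have hc : 0 ≤ c := by
    rw [hc_def]
    exact div_nonneg (mul_nonneg (pow_nonneg (by linarith) 3) hθ.1) (by positivity)
  have hBA : B * ((N:ℝ)+α) = A := by rw [hB_def]; exact div_mul_cancel₀ A hNα.ne'
  have hc'c : c' * ((N:ℝ)-2) = c := by rw [hc'_def]; exact div_mul_cancel₀ c hN2.ne'
  have hSt : ∀ t : ℝ, S t = (N:ℝ) * V (t•x) + (fderiv ℝ V (t•x)) (t•x) := by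
    intro t; rw [hS_def]
  have hanti := hanti0 x hx
  -- derivative of g(t) = t^N * V(t•x)
  have hg : ∀ t : ℝ, 0 < t →
      HasDerivAt (fun s : ℝ => s^N * V (s•x)) (t^(N-1) * S t) t := by
    intro t ht
    have hline : HasDerivAt (fun s : ℝ => s • x) x t := by
      simpa using (hasDerivAt_id t).smul_const x
    have hVt : HasDerivAt (fun s : ℝ => V (s•x)) ((fderiv ℝ V (t•x)) x) t :=
      ((hDiff (t•x)).hasFDerivAt).comp_hasDerivAt t hline
    have hmul := (hasDerivAt_pow N t).mul hVt
    convert hmul using 1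
    · rfl
    · rfl
    · rfl
    have hmap : (fderiv ℝ V (t•x)) (t•x) = t * (fderiv ℝ V (t•x)) x := by
      rw [(fderiv ℝ V (t•x)).map_smul]; rfl
    have hNpow : t^N = t^(N-1) * t := by
      conv_lhs => rw [show N = (N-1)+1 by omega]
      rw [pow_succ]
    rw [hSt t, hmap, hNpow]; ring
  -- the value of the V3 function at 1 is A
  have hW1 : ((N : ℝ) * V ((1:ℝ) • x) + fderiv ℝ V ((1:ℝ) • x) ((1:ℝ) • x)) / (1:ℝ) ^ α
        + ((N : ℝ) - 2) ^ 3 * θ / (4 * (1:ℝ) ^ (α + 2) * ‖x‖ ^ 2) = A := by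
    rw [one_smul, Real.one_rpow, Real.one_rpow, hA_def, hc_def]
    ring
  -- upper bound on S for t ≥ 1
  have hSle : ∀ t : ℝ, 1 ≤ t → S t ≤ A * t^α := by
    intro t ht
    have ht0 : (0:ℝ) < t := lt_of_lt_of_le one_pos ht
    have h := hanti (Set.mem_Ioi.2 one_pos) (Set.mem_Ioi.2 ht0) ht
    simp only [] at h
    rw [hW1, ← hSt t] at h
    have h2 : 0 ≤ ((N:ℝ)-2)^3*θ/(4*t^(α+2)*‖x‖^2) := by
      apply div_nonneg (mul_nonneg (pow_nonneg (by linarith) 3) hθ.1)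
      have := Real.rpow_pos_of_pos ht0 (α+2)
      positivity
    have h3 : S t / t^α ≤ A := by linarith
    have htα : (0:ℝ) < t^α := Real.rpow_pos_of_pos ht0 α
    calc S t = S t / t^α * t^α := by rw [div_mul_cancel₀ _ htα.ne']
    _ ≤ A * t^α := mul_le_mul_of_nonneg_right h3 htα.le
  -- lower bound on S for 0 < t ≤ 1
  have hSge : ∀ t : ℝ, 0 < t → t ≤ 1 → A * t^α - c / t^2 ≤ S t := by
    intro t ht0 ht1
    have h := hanti (Set.mem_Ioi.2 ht0) (Set.mem_Ioi.2 one_pos) ht1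
    simp only [] at h
    rw [hW1] at h
    have htα : (0:ℝ) < t^α := Real.rpow_pos_of_pos ht0 α
    have htα2 : (0:ℝ) < t^(α+2) := Real.rpow_pos_of_pos ht0 (α+2)
    have hsplit : t^(α+2) = t^α * t^2 := by
      rw [Real.rpow_add ht0, show (2:ℝ) = ((2:ℕ):ℝ) by norm_num, Real.rpow_natCast]
    have hc2 : ((N:ℝ)-2)^3*θ/(4*t^(α+2)*‖x‖^2) = c / t^(α+2) := by
      rw [hc_def, div_div]; ring_nf
    rw [hc2, ← hSt t] at h
    -- h : A ≤ S t / t^α + c / t^(α+2)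
    have h4 := mul_le_mul_of_nonneg_right h htα.le
    have h5 : (S t / t^α + c / t^(α+2)) * t^α = S t + c / t^2 := by
      rw [hsplit]; field_simp
    rw [h5] at h4
    linarith
  -- power juggling
  have hpow : ∀ t:ℝ, 0 < t → (t:ℝ)^(N-1) * t^α = t^(((N:ℝ)+α)-1) := by
    intro t ht
    rw [← Real.rpow_natCast t (N-1), ← Real.rpow_add ht]
    congr 1
    have h9 : ((N-1:ℕ):ℝ) = (N:ℝ)-1 := by
      rw [Nat.cast_sub (by omega)]; norm_num
    rw [h9]; ring
  -- Part 1: 0 ≤ A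
  have hlow : ∀ T:ℝ, 1 ≤ T → B - V x ≤ B * T^((N:ℝ)+α) - T^N * V (T•x) := by
    intro T hT
    have key := mono_of_hasDerivAt_aux
      (f := fun t : ℝ => B * t^((N:ℝ)+α) - t^N * V (t•x))
      (f' := fun t : ℝ => A * t^(((N:ℝ)+α)-1) - t^(N-1) * S t)
      (a := 1) (b := T) ?hd ?hpos hT
    · simpa [Real.one_rpow] using key
    · intro t ht
      have ht0 : (0:ℝ) < t := lt_of_lt_of_le one_pos ht.1
      have h1 : HasDerivAt (fun s:ℝ => s^((N:ℝ)+α)) (((N:ℝ)+α) * t^(((N:ℝ)+α)-1)) t :=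
        Real.hasDerivAt_rpow_const (Or.inl ht0.ne')
      have h2 := (h1.const_mul B).sub (hg t ht0)
      convert h2 using 1
      · rfl
      · rfl
      · rfl
      rw [← hBA]; ring
    · intro t ht
      have ht0 : (0:ℝ) < t := lt_trans one_pos ht.1
      have h1 := hSle t ht.1.le
      have h2 : t^(N-1) * S t ≤ t^(N-1) * (A * t^α) :=
        mul_le_mul_of_nonneg_left h1 (by positivity)
      have h3 : t^(N-1) * (A * t^α) = A * t^(((N:ℝ)+α)-1) := by
        rw [← hpow t ht0]; ring
      rw [h3] at h2
      show (0:ℝ) ≤ A * t^(((N:ℝ)+α)-1) - t^(N-1) * S t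
      linarith
  have hA_nonneg : 0 ≤ A := by
    by_contra hAneg
    push_neg at hAneg
    have hB : B < 0 := by rw [hB_def]; exact div_neg_of_neg_of_pos hAneg hNα
    set M : ℝ := 2 * (Vinf - B) / (-B) with hM_def
    set T : ℝ := max 1 M with hT_def
    have hT1 : (1:ℝ) ≤ T := le_max_left _ _
    have hTM : M ≤ T := le_max_right _ _
    have hTp : M ≤ T^((N:ℝ)+α) := by
      have h1 : T^(1:ℝ) ≤ T^((N:ℝ)+α) := Real.rpow_le_rpow_of_exponent_le hT1 h1Nα
      rw [Real.rpow_one] at h1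
      linarith
    have key := hlow T hT1
    have hVT : 0 ≤ T^N * V (T•x) := mul_nonneg (pow_nonneg (by linarith) N) (hVnn _)
    have hmul : B * T^((N:ℝ)+α) ≤ B * M := mul_le_mul_of_nonpos_left hTp hB.le
    have hBM : B * M = 2*B - 2*Vinf := by
      have hBne : B ≠ 0 := hB.ne
      rw [hM_def]
      field_simp [hBne]
      ring
    have hVx := hV2 x
    linarith
  have hB0 : 0 ≤ B := by rw [hB_def]; exact div_nonneg hA_nonneg hNα.le
  -- Part 2 : B ≤ c' + V x
  have hup : ∀ ε:ℝ, 0 < ε → ε ≤ 1 → B - c' - V x ≤ B * ε := by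
    intro ε hε0 hε1
    have key := mono_of_hasDerivAt_aux
      (f := fun t : ℝ => -(B * t^((N:ℝ)+α) - c' * t^(N-2) - t^N * V (t•x)))
      (f' := fun t : ℝ => -(A * t^(((N:ℝ)+α)-1) - c * t^(N-3) - t^(N-1) * S t))
      (a := ε) (b := 1) ?hd2 ?hpos2 hε1
    · simp only [Real.one_rpow, one_pow, one_smul, mul_one] at key
      have key2 : B - c' - V x ≤ B * ε^((N:ℝ)+α) - c' * ε^(N-2) - ε^N * V (ε•x) := by
        linarith
      have hεpow : ε^((N:ℝ)+α) ≤ ε := by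
        have h1 : ε^((N:ℝ)+α) ≤ ε^(1:ℝ) :=
          Real.rpow_le_rpow_of_exponent_ge hε0 hε1 h1Nα
        rwa [Real.rpow_one] at h1
      have e1 : B * ε^((N:ℝ)+α) ≤ B * ε := mul_le_mul_of_nonneg_left hεpow hB0
      have e2 : 0 ≤ c' * ε^(N-2) := by
        apply mul_nonneg _ (by positivity)
        rw [hc'_def]; exact div_nonneg hc hN2.le
      have e3 : 0 ≤ ε^N * V (ε•x) := mul_nonneg (by positivity) (hVnn _)
      linarith
    · intro t ht
      have ht0 : (0:ℝ) < t := lt_of_lt_of_le hε0 ht.1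
      have h1 : HasDerivAt (fun s:ℝ => s^((N:ℝ)+α)) (((N:ℝ)+α) * t^(((N:ℝ)+α)-1)) t :=
        Real.hasDerivAt_rpow_const (Or.inl ht0.ne')
      have h2 := (((h1.const_mul B).sub ((hasDerivAt_pow (N-2) t).const_mul c')).sub
        (hg t ht0)).neg
      convert h2 using 1
      · rfl
      · rfl
      · rfl
      have hcast : ((N-2:ℕ):ℝ) = (N:ℝ)-2 := by
        rw [Nat.cast_sub (by omega)]; norm_num
      rw [show N-2-1 = N-3 by omega, ← hBA, ← hc'c, hcast]
      ring
    · intro t ht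
      have ht0 : (0:ℝ) < t := lt_trans hε0 ht.1
      have h1 := hSge t ht0 ht.2.le
      have h2 : t^(N-1) * (A * t^α - c / t^2) ≤ t^(N-1) * S t :=
        mul_le_mul_of_nonneg_left h1 (by positivity)
      have h3 : t^(N-1) * (A * t^α - c / t^2) = A * t^(((N:ℝ)+α)-1) - c * t^(N-3) := by
        have hsplit : (t:ℝ)^(N-1) = t^(N-3) * t^2 := by
          rw [← pow_add]; congr 1; omega
        have ha : t^(N-1) * (A * t^α) = A * t^(((N:ℝ)+α)-1) := by
          rw [← hpow t ht0]; ring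
        have hb : t^(N-1) * (c / t^2) = c * t^(N-3) := by
          rw [hsplit]
          field_simp
        rw [mul_sub, ha, hb]
      rw [h3] at h2
      show (0:ℝ) ≤ -(A * t^(((N:ℝ)+α)-1) - c * t^(N-3) - t^(N-1) * S t)
      linarith
  have hBle : B ≤ c' + V x := by
    by_contra hcon
    push_neg at hcon
    set δ : ℝ := B - c' - V x with hδ_def
    have hδ0 : 0 < δ := by rw [hδ_def]; linarith
    have hB1 : (0:ℝ) < B + 1 := by linarith
    set ε : ℝ := min 1 (δ/(2*(B+1))) with hε_def
    have hε0 : 0 < ε := lt_min one_pos (by positivity)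
    have hε1 : ε ≤ 1 := min_le_left _ _
    have h := hup ε hε0 hε1
    have h2 : B * ε ≤ (B+1) * ε := by nlinarith
    have h3 : (B+1) * ε ≤ (B+1) * (δ/(2*(B+1))) :=
      mul_le_mul_of_nonneg_left (min_le_right _ _) hB1.le
    have h4 : (B+1) * (δ/(2*(B+1))) = δ/2 := by field_simp
    rw [hδ_def] at *
    linarith
  -- conclude
  have hfd : fderiv ℝ V x x = A - (N:ℝ) * V x - c := by rw [hA_def]; ring
  constructor
  · rw [hfd]
    linarith [hA_nonneg, hc_def.le, hc_def.ge]
  · have hAle : A ≤ (c' + V x) * ((N:ℝ)+α) := by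
      calc A = B * ((N:ℝ)+α) := hBA.symm
      _ ≤ (c' + V x) * ((N:ℝ)+α) := mul_le_mul_of_nonneg_right hBle hNα.le
    have e1 : (c' + V x) * ((N:ℝ)+α) = ((N:ℝ)+α)*c/((N:ℝ)-2) + ((N:ℝ)+α) * V x := by
      rw [hc'_def]; field_simp
    have hkey : ((N:ℝ)+α) * c / ((N:ℝ)-2) - c = ((N:ℝ)-2)^2*(2+α)*θ/(4*‖x‖^2) := by
      rw [hc_def]; field_simp; ring
    have e2 : α * V x ≤ α * Vinf := mul_le_mul_of_nonneg_left (hV2 x) hα.le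
    have e3 : ((N:ℝ)+α) * V x = (N:ℝ)*V x + α * V x := by ring
    rw [hfd]
    linarith
end
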